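/- arXiv:1508.06300 — 2 statements merged into one kernel-verified Lean document; each statement's English description precedes it below -/
import Mathlib

section
/- Suppose F : (0,∞) → ℂ is smooth and there exist β > −1 and an integer M > β + 1 such that |F^(k)(λ)| ≤ C λ^(β−k) for all 0 ≤ k ≤ M and all λ in the support of a fixed smooth compactly supported cutoff Φ̃. Then for all ρ ∈ ℝ, |∫_0^∞ e^{iρλ} F(λ) Φ̃(λ) dλ| ≲ ⟨ρ⟩^(−β−1). -/
open MeasureTheory Real

noncomputable def jap (t : ℝ) : ℝ := Real.sqrt (1 + t ^ 2)

lemma norm_exp_I_mul (ρ x : ℝ) : ‖Complex.exp (Complex.I * ρ * x)‖ = 1 := by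
  rw [Complex.norm_exp]; simp

lemma aux_integrableOn {h : ℝ → ℂ} {a R : ℝ} (_ha : 0 < a)
    (hc : ContinuousOn h (Set.Ici a)) (hR : ∀ x, R ≤ x → h x = 0) :
    IntegrableOn h (Set.Ioi a) := by
  have h1 : IntegrableOn h (Set.Ioc a (max a R)) := by
    apply (hc.mono ?_).integrableOn_Icc |>.mono_set Set.Ioc_subset_Icc_self
    exact fun x hx => hx.1
  have h2 : IntegrableOn h (Set.Ioi (max a R)) := by
    refine (integrableOn_zero).congr_fun (fun x hx => ?_) measurableSet_Ioi
    exact (hR x (le_of_lt (lt_of_le_of_lt (le_max_right a R) hx))).symm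
  have := h1.union h2
  rwa [Set.Ioc_union_Ioi_eq_Ioi (le_max_left a R)] at this

-- IBP identity
lemma IBP_step (G : ℝ → ℂ) (hGcd : ContDiffOn ℝ (⊤ : ℕ∞) G (Set.Ioi 0))
    (hGsupp : HasCompactSupport G) (ρ a : ℝ) (ha : 0 < a) (hρ : ρ ≠ 0) :
    ∫ x in Set.Ioi a, Complex.exp (Complex.I * ρ * x) * G x
      = -((Complex.I * ρ)⁻¹ * Complex.exp (Complex.I * ρ * a) * G a)
        - (Complex.I * ρ)⁻¹ * ∫ x in Set.Ioi a, Complex.exp (Complex.I * ρ * x) * deriv G x := by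
  have hiρ : (Complex.I * ρ : ℂ) ≠ 0 := by
    simp [Complex.ext_iff, hρ, Complex.I_ne_zero]
  set φ : ℝ → ℂ := fun x => (Complex.I * ρ)⁻¹ * (Complex.exp (Complex.I * ρ * x) * G x) with hφ
  set ψ : ℝ → ℂ := fun x => Complex.exp (Complex.I * ρ * x) * G x
      + (Complex.I * ρ)⁻¹ * (Complex.exp (Complex.I * ρ * x) * deriv G x) with hψ
  -- G diff
  have hGdiff : ∀ x : ℝ, 0 < x → HasDerivAt G (deriv G x) x := fun x hx =>
    (((hGcd.differentiableOn (by simp)).differentiableAt (Ioi_mem_nhds hx)).hasDerivAt)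
  have hexp : ∀ x : ℝ, HasDerivAt (fun y : ℝ => Complex.exp (Complex.I * ρ * y))
      (Complex.I * ρ * Complex.exp (Complex.I * ρ * x)) x := by
    intro x
    have h1 : HasDerivAt (fun y : ℝ => (Complex.I * ρ * y : ℂ)) (Complex.I * ρ) x := by
      simpa using (Complex.ofRealCLM.hasDerivAt (x := x)).const_mul (Complex.I * ρ)
    simpa [mul_comm] using h1.cexp
  have hφderiv : ∀ x ∈ Set.Ioi a, HasDerivAt φ (ψ x) x := by
    intro x hx
    have hx0 : 0 < x := lt_trans ha hx
    have := ((hexp x).mul (hGdiff x hx0)).const_mul ((Complex.I * ρ)⁻¹)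
    refine this.congr_deriv ?_
    rw [hψ]
    beta_reduce
    linear_combination (Complex.exp (Complex.I * ρ * x) * G x) * inv_mul_cancel₀ hiρ
  -- continuity at a
  have hGcont : ContinuousOn G (Set.Ici a) :=
    (hGcd.continuousOn).mono (fun x hx => lt_of_lt_of_le ha hx)
  have hG'cont : ContinuousOn (deriv G) (Set.Ici a) :=
    (hGcd.continuousOn_deriv_of_isOpen isOpen_Ioi (by simp)).mono
      (fun x hx => lt_of_lt_of_le ha hx)
  have hexpcont : Continuous (fun x : ℝ => Complex.exp (Complex.I * ρ * x)) :=
    Complex.continuous_exp.comp (by continuity)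
  -- support bound
  obtain ⟨R, hRsupp⟩ : ∃ R : ℝ, ∀ x ∈ tsupport G, x ≤ R := by
    rcases hGsupp.isCompact.bddAbove with ⟨R, hR⟩
    exact ⟨R, fun x hx => hR hx⟩
  have hGzero : ∀ x, R < x → G x = 0 := fun x hx =>
    image_eq_zero_of_notMem_tsupport (fun h => absurd (hRsupp x h) (not_le.2 hx))
  have hG'zero : ∀ x, R < x → deriv G x = 0 := by
    intro x hx
    have : x ∉ tsupport (deriv G) := fun h =>
      absurd (hRsupp x ((closure_minimal support_deriv_subset isClosed_closure) h)) (not_le.2 hx)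
    exact image_eq_zero_of_notMem_tsupport this
  have hψzero : ∀ x, R + 1 ≤ x → ψ x = 0 := by
    intro x hx
    have hx' : R < x := by linarith
    simp [hψ, hGzero x hx', hG'zero x hx']
  -- integrability pieces
  have hint1 : IntegrableOn (fun x : ℝ => Complex.exp (Complex.I * ρ * x) * G x) (Set.Ioi a) := by
    refine aux_integrableOn ha ((hexpcont.continuousOn).mul hGcont) (R := R + 1) ?_
    intro x hx; simp [hGzero x (by linarith)]
  have hint2 : IntegrableOn (fun x : ℝ => Complex.exp (Complex.I * ρ * x) * deriv G x)
      (Set.Ioi a) := by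
    refine aux_integrableOn ha ((hexpcont.continuousOn).mul hG'cont) (R := R + 1) ?_
    intro x hx; simp [hG'zero x (by linarith)]
  have hintψ : IntegrableOn ψ (Set.Ioi a) := by
    exact hint1.add (hint2.const_mul _)
  -- tendsto
  have htend : Filter.Tendsto φ Filter.atTop (nhds 0) := by
    apply Filter.Tendsto.congr' _ tendsto_const_nhds
    filter_upwards [Filter.eventually_ge_atTop (R + 1)] with x hx
    simp [hφ, hGzero x (by linarith)]
  have hcont : ContinuousWithinAt φ (Set.Ici a) a := by
    apply ContinuousWithinAt.const_smul ?_ ((Complex.I * ↑ρ)⁻¹) |>.congr (fun y _ => rfl) rfl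
    exact ((hexpcont.continuousOn).mul hGcont) a Set.self_mem_Ici
  have key := integral_Ioi_of_hasDerivAt_of_tendsto hcont hφderiv hintψ htend
  have hsplit : ∫ x in Set.Ioi a, ψ x
      = (∫ x in Set.Ioi a, Complex.exp (Complex.I * ρ * x) * G x)
        + (Complex.I * ρ)⁻¹ * ∫ x in Set.Ioi a, Complex.exp (Complex.I * ρ * x) * deriv G x := by
    rw [hψ]
    rw [integral_add hint1 (hint2.const_mul _), integral_const_mul]
  rw [hsplit] at key
  rw [zero_sub] at key
  have : φ a = (Complex.I * ρ)⁻¹ * Complex.exp (Complex.I * ρ * a) * G a := by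
    rw [hφ]; ring
  rw [this] at key
  linear_combination key

lemma key_IBP : ∀ (m : ℕ) (γ : ℝ), γ - m < -1 → ∃ c : ℝ, 0 < c ∧
    ∀ (A : ℝ), 0 ≤ A → ∀ (G : ℝ → ℂ), ContDiffOn ℝ (⊤ : ℕ∞) G (Set.Ioi 0) →
    HasCompactSupport G →
    (∀ k, k ≤ m → ∀ x : ℝ, 0 < x → ‖iteratedDeriv k G x‖ ≤ A * x ^ (γ - (k : ℝ))) →
    ∀ ρ : ℝ, 1 ≤ |ρ| →
    ‖∫ x in Set.Ioi (|ρ|⁻¹), Complex.exp (Complex.I * ρ * x) * G x‖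
      ≤ A * c * |ρ| ^ (-γ - 1) := by
  intro m
  induction m with
  | zero =>
    intro γ hγ
    simp only [Nat.cast_zero, sub_zero] at hγ
    refine ⟨(-γ-1)⁻¹, inv_pos.2 (by linarith), ?_⟩
    intro A hA G _ _ hGb ρ hρ
    have hρ0 : (0:ℝ) < |ρ| := lt_of_lt_of_le one_pos hρ
    have ha : (0:ℝ) < |ρ|⁻¹ := inv_pos.2 hρ0
    have hint : IntegrableOn (fun x : ℝ => A * x ^ γ) (Set.Ioi (|ρ|⁻¹)) :=
      (integrableOn_Ioi_rpow_of_lt hγ ha).const_mul A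
    have hbound : ∀ᵐ (x:ℝ) ∂(volume.restrict (Set.Ioi (|ρ|⁻¹))),
        ‖Complex.exp (Complex.I * ρ * x) * G x‖ ≤ A * x ^ γ := by
      refine (ae_restrict_iff' measurableSet_Ioi).2 (Filter.Eventually.of_forall fun x hx => ?_)
      have hx0 : 0 < x := lt_trans ha hx
      rw [norm_mul, norm_exp_I_mul, one_mul]
      simpa using hGb 0 le_rfl x hx0
    calc ‖∫ x in Set.Ioi (|ρ|⁻¹), Complex.exp (Complex.I * ρ * x) * G x‖
        ≤ ∫ x in Set.Ioi (|ρ|⁻¹), A * x ^ γ := norm_integral_le_of_norm_le hint hbound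
      _ = A * (-(|ρ|⁻¹) ^ (γ + 1) / (γ + 1)) := by
          rw [integral_const_mul, integral_Ioi_rpow_of_lt hγ ha]
      _ = A * (-γ-1)⁻¹ * |ρ| ^ (-γ - 1) := by
          rw [Real.inv_rpow (le_of_lt hρ0), ← Real.rpow_neg (le_of_lt hρ0)]
          rw [show -(γ+1) = -γ-1 by ring]
          field_simp
          rw [show (-γ - 1:ℝ) = -(γ+1) by ring, div_neg]
  | succ m ih =>
    intro γ hγ
    have hγ' : (γ - 1) - m < -1 := by push_cast at hγ ⊢; linarith
    obtain ⟨c', hc', H⟩ := ih (γ - 1) hγ'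
    refine ⟨1 + c', by linarith, ?_⟩
    intro A hA G hGcd hGsupp hGb ρ hρ
    have hρ0 : (0:ℝ) < |ρ| := lt_of_lt_of_le one_pos hρ
    have hρne : ρ ≠ 0 := fun h => by simp [h] at hρ0
    have ha : (0:ℝ) < |ρ|⁻¹ := inv_pos.2 hρ0
    set a := |ρ|⁻¹ with ha_def
    -- deriv G data
    have hG'cd : ContDiffOn ℝ (⊤ : ℕ∞) (deriv G) (Set.Ioi 0) :=
      hGcd.deriv_of_isOpen isOpen_Ioi (by simp)
    have hG'supp : HasCompactSupport (deriv G) := hGsupp.deriv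
    have hG'b : ∀ k, k ≤ m → ∀ x : ℝ, 0 < x →
        ‖iteratedDeriv k (deriv G) x‖ ≤ A * x ^ ((γ - 1) - (k : ℝ)) := by
      intro k hk x hx
      have := hGb (k+1) (by omega) x hx
      rw [iteratedDeriv_succ'] at this
      convert this using 2
      push_cast; ring
    have hIH := H A hA (deriv G) hG'cd hG'supp hG'b ρ hρ
    rw [IBP_step G hGcd hGsupp ρ a ha hρne]
    have hnorm_inv : ‖(Complex.I * (ρ:ℂ))⁻¹‖ = |ρ|⁻¹ := by
      rw [norm_inv]; simp
    have hGa : ‖G a‖ ≤ A * a ^ γ := by simpa using hGb 0 (by omega) a ha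
    have hb1 : ‖(Complex.I * ρ)⁻¹ * Complex.exp (Complex.I * ρ * a) * G a‖
        ≤ A * |ρ| ^ (-γ - 1) := by
      rw [norm_mul, norm_mul, hnorm_inv, norm_exp_I_mul, mul_one]
      calc |ρ|⁻¹ * ‖G a‖ ≤ |ρ|⁻¹ * (A * a ^ γ) := by
            exact mul_le_mul_of_nonneg_left hGa (le_of_lt ha)
        _ = A * |ρ| ^ (-γ - 1) := by
            rw [ha_def, Real.inv_rpow (le_of_lt hρ0), ← Real.rpow_neg (le_of_lt hρ0)]
            rw [show (-γ - 1 : ℝ) = -γ + -1 by ring,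
              Real.rpow_add hρ0, Real.rpow_neg_one]
            ring
    have hb2 : ‖(Complex.I * ρ)⁻¹ * ∫ x in Set.Ioi a,
          Complex.exp (Complex.I * ρ * x) * deriv G x‖ ≤ A * c' * |ρ| ^ (-γ - 1) := by
      rw [norm_mul, hnorm_inv]
      calc |ρ|⁻¹ * ‖∫ x in Set.Ioi a, Complex.exp (Complex.I * ρ * x) * deriv G x‖
          ≤ |ρ|⁻¹ * (A * c' * |ρ| ^ (-(γ-1) - 1)) := by
            exact mul_le_mul_of_nonneg_left hIH (le_of_lt ha)
        _ = A * c' * |ρ| ^ (-γ - 1) := by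
            rw [show (-(γ-1) - 1 : ℝ) = -γ by ring,
              show (-γ - 1 : ℝ) = -γ + -1 by ring,
              Real.rpow_add hρ0, Real.rpow_neg_one]
            ring
    calc ‖-((Complex.I * ρ)⁻¹ * Complex.exp (Complex.I * ρ * a) * G a)
          - (Complex.I * ρ)⁻¹ * ∫ x in Set.Ioi a, Complex.exp (Complex.I * ρ * x) * deriv G x‖
        ≤ ‖(Complex.I * ρ)⁻¹ * Complex.exp (Complex.I * ρ * a) * G a‖
          + ‖(Complex.I * ρ)⁻¹ * ∫ x in Set.Ioi a,
              Complex.exp (Complex.I * ρ * x) * deriv G x‖ := by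
          rw [sub_eq_add_neg, ← neg_add]
          rw [norm_neg]
          exact norm_add_le _ _
      _ ≤ A * |ρ| ^ (-γ - 1) + A * c' * |ρ| ^ (-γ - 1) := add_le_add hb1 hb2
      _ = A * (1 + c') * |ρ| ^ (-γ - 1) := by ring

lemma leibniz_bound (F : ℝ → ℂ) (Φ : ℝ → ℝ) (β : ℝ) (M : ℕ) (C Cφ : ℝ)
    (hC : 0 < C) (hCφ : 0 < Cφ)
    (hF : ContDiffOn ℝ (⊤ : ℕ∞) F (Set.Ioi 0))
    (hΦsmooth : ContDiff ℝ (⊤ : ℕ∞) Φ)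
    (hFk : ∀ k ≤ M, ∀ lam : ℝ, 0 < lam → lam ∈ tsupport Φ →
        ‖iteratedDeriv k F lam‖ ≤ C * lam ^ (β - (k : ℝ)))
    (hΦk : ∀ k ≤ M, ∀ lam : ℝ, 0 < lam →
        |iteratedDeriv k Φ lam| ≤ Cφ * lam ^ (-(k : ℝ))) :
    ∀ k, k ≤ M → ∀ x : ℝ, 0 < x →
      ‖iteratedDeriv k (fun y : ℝ => F y * (Φ y : ℂ)) x‖
        ≤ (C * Cφ * 2 ^ M) * x ^ (β - (k : ℝ)) := by
  intro k hk x hx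
  set G : ℝ → ℂ := fun y : ℝ => F y * (Φ y : ℂ) with hG
  by_cases hxs : x ∈ tsupport Φ
  · have hΦℂ : ContDiffOn ℝ (⊤ : ℕ∞) (fun y : ℝ => (Φ y : ℂ)) (Set.Ioi 0) :=
      (Complex.ofRealCLM.contDiff.comp hΦsmooth).contDiffOn
    have h1 : ‖iteratedDeriv k G x‖ = ‖iteratedFDerivWithin ℝ k G (Set.Ioi 0) x‖ := by
      rw [← norm_iteratedFDeriv_eq_norm_iteratedDeriv,
        iteratedFDerivWithin_of_isOpen k isOpen_Ioi hx]
    have h2 := norm_iteratedFDerivWithin_mul_le (𝕜 := ℝ) hF hΦℂ (uniqueDiffOn_Ioi 0)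
      (Set.mem_Ioi.2 hx) ((by exact_mod_cast le_top) : (k : WithTop ℕ∞) ≤ ((⊤ : ℕ∞) : WithTop ℕ∞))
    rw [hG, h1]
    refine le_trans h2 ?_
    have hterm : ∀ i ∈ Finset.range (k + 1),
        (k.choose i : ℝ) * ‖iteratedFDerivWithin ℝ i F (Set.Ioi 0) x‖ *
          ‖iteratedFDerivWithin ℝ (k - i) (fun y : ℝ => (Φ y : ℂ)) (Set.Ioi 0) x‖
        ≤ (k.choose i : ℝ) * (C * Cφ) * x ^ (β - (k : ℝ)) := by
      intro i hi
      have hik : i ≤ k := Nat.lt_succ_iff.1 (Finset.mem_range.1 hi)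
      have hFi : ‖iteratedFDerivWithin ℝ i F (Set.Ioi 0) x‖ ≤ C * x ^ (β - (i : ℝ)) := by
        rw [iteratedFDerivWithin_of_isOpen i isOpen_Ioi hx,
          norm_iteratedFDeriv_eq_norm_iteratedDeriv]
        exact hFk i (le_trans hik hk) x hx hxs
      have hΦi : ‖iteratedFDerivWithin ℝ (k - i) (fun y : ℝ => (Φ y : ℂ)) (Set.Ioi 0) x‖
          ≤ Cφ * x ^ (-((k - i : ℕ) : ℝ)) := by
        rw [iteratedFDerivWithin_of_isOpen (k - i) isOpen_Ioi hx]
        have hco : (fun y : ℝ => (Φ y : ℂ)) = (RCLike.ofRealLI (K := ℂ)) ∘ Φ := rfl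
        rw [hco, LinearIsometry.norm_iteratedFDeriv_comp_left (RCLike.ofRealLI (K := ℂ))
            hΦsmooth.contDiffAt ((by exact WithTop.coe_le_coe.2 (le_top : ((k - i : ℕ) : ℕ∞) ≤ ⊤)) : ((k - i : ℕ) : WithTop ℕ∞) ≤ ((⊤ : ℕ∞) : WithTop ℕ∞)),
          norm_iteratedFDeriv_eq_norm_iteratedDeriv, Real.norm_eq_abs]
        exact hΦk (k - i) (le_trans (Nat.sub_le k i) hk) x hx
      calc (k.choose i : ℝ) * ‖iteratedFDerivWithin ℝ i F (Set.Ioi 0) x‖ *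
            ‖iteratedFDerivWithin ℝ (k - i) (fun y : ℝ => (Φ y : ℂ)) (Set.Ioi 0) x‖
          ≤ (k.choose i : ℝ) * (C * x ^ (β - (i : ℝ))) * (Cφ * x ^ (-((k - i : ℕ) : ℝ))) := by
            apply mul_le_mul ?_ hΦi (norm_nonneg _) ?_
            · exact mul_le_mul_of_nonneg_left hFi (Nat.cast_nonneg _)
            · positivity
        _ = (k.choose i : ℝ) * (C * Cφ) *
              (x ^ (β - (i : ℝ)) * x ^ (-((k : ℝ) - (i : ℝ)))) := by
            rw [Nat.cast_sub hik]; ring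
        _ = (k.choose i : ℝ) * (C * Cφ) * x ^ (β - (k : ℝ)) := by
            rw [← Real.rpow_add hx]; ring_nf
    refine le_trans (Finset.sum_le_sum hterm) ?_
    rw [← Finset.sum_mul, ← Finset.sum_mul]
    have hsum : ∑ i ∈ Finset.range (k + 1), (k.choose i : ℝ) = 2 ^ k := by
      rw [← Nat.cast_sum]
      rw [Nat.sum_range_choose]
      push_cast; ring
    rw [hsum]
    have : (2:ℝ) ^ k ≤ 2 ^ M := by
      apply pow_le_pow_right₀ one_le_two hk
    have hxp : (0:ℝ) ≤ x ^ (β - (k:ℝ)) := le_of_lt (Real.rpow_pos_of_pos hx _)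
    refine le_trans (mul_le_mul_of_nonneg_right
      (mul_le_mul_of_nonneg_right this (le_of_lt (mul_pos hC hCφ))) hxp) (le_of_eq (by ring))
  · have hev : G =ᶠ[nhds x] 0 := by
      have hopen : IsOpen (tsupport Φ)ᶜ := (isClosed_tsupport Φ).isOpen_compl
      filter_upwards [hopen.mem_nhds hxs] with y hy
      simp [hG, image_eq_zero_of_notMem_tsupport hy]
    rw [hG] at hev ⊢
    rw [Filter.EventuallyEq.iteratedDeriv_eq k hev]
    have hz : iteratedDeriv k (0 : ℝ → ℂ) x = 0 := by
      rw [show (0 : ℝ → ℂ) = fun _ : ℝ => (0:ℂ) from rfl]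
      simp only [iteratedDeriv, iteratedFDeriv_zero_fun]
      simp
    rw [hz, norm_zero]
    positivity

lemma jap_one_le (ρ : ℝ) : 1 ≤ jap ρ := by
  have h := Real.sqrt_le_sqrt (show (1:ℝ) ≤ 1 + ρ ^ 2 from le_add_of_nonneg_right (sq_nonneg ρ))
  simpa [jap] using h

lemma jap_le_sqrt_two_mul_max (ρ : ℝ) : jap ρ ≤ Real.sqrt 2 * max 1 |ρ| := by
  have hm1 : (1:ℝ) ≤ max 1 |ρ| := le_max_left _ _
  have hm0 : (0:ℝ) < max 1 |ρ| := lt_of_lt_of_le one_pos hm1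
  have h2 : |ρ| ≤ max 1 |ρ| := le_max_right _ _
  calc jap ρ = Real.sqrt (1 + ρ ^ 2) := rfl
    _ ≤ Real.sqrt (2 * (max 1 |ρ|) ^ 2) := by
        apply Real.sqrt_le_sqrt
        nlinarith [abs_nonneg ρ, sq_abs ρ]
    _ = Real.sqrt 2 * max 1 |ρ| := by
        rw [Real.sqrt_mul (by norm_num), Real.sqrt_sq (le_of_lt hm0)]

/-- If `F` is smooth on `(0,∞)` with `|F^(k)(λ)| ≤ C λ^(β−k)` for `0 ≤ k ≤ M` on
the support of a smooth compactly supported cutoff `Φ̃` (satisfying `|Φ̃^(k)(λ)| ≲ λ^(−k)`),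
where `β > −1` and `M > β + 1`, then `|∫_0^∞ e^{iρλ} F(λ) Φ̃(λ) dλ| ≲ ⟨ρ⟩^(−β−1)`. -/
theorem IBP_bound
    (F : ℝ → ℂ) (Φ : ℝ → ℝ) (β : ℝ) (M : ℕ) (C Cφ : ℝ)
    (hβ : -1 < β) (hM : β + 1 < (M : ℝ))
    (hC : 0 < C) (hCφ : 0 < Cφ)
    (hF : ContDiffOn ℝ (⊤ : ℕ∞) F (Set.Ioi 0))
    (hΦsmooth : ContDiff ℝ (⊤ : ℕ∞) Φ) (hΦsupp : HasCompactSupport Φ)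
    (hFk : ∀ k ≤ M, ∀ lam : ℝ, 0 < lam → lam ∈ tsupport Φ →
        ‖iteratedDeriv k F lam‖ ≤ C * lam ^ (β - (k : ℝ)))
    (hΦk : ∀ k ≤ M, ∀ lam : ℝ, 0 < lam →
        |iteratedDeriv k Φ lam| ≤ Cφ * lam ^ (-(k : ℝ))) :
    ∃ C' : ℝ, 0 < C' ∧ ∀ ρ : ℝ,
      ‖∫ lam in Set.Ioi (0 : ℝ),
          Complex.exp (Complex.I * ρ * lam) * F lam * (Φ lam : ℂ)‖
        ≤ C' * jap ρ ^ (-β - 1) := by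
  set G : ℝ → ℂ := fun y : ℝ => F y * (Φ y : ℂ) with hGdef
  set A : ℝ := C * Cφ * 2 ^ M with hAdef
  have hA : 0 < A := by positivity
  -- iterated derivative bounds for G (proved above, assume here)
  have hGb : ∀ k, k ≤ M → ∀ x : ℝ, 0 < x →
      ‖iteratedDeriv k G x‖ ≤ A * x ^ (β - (k : ℝ)) := by
    intro k hk x hx
    simpa only [hGdef, hAdef] using
      leibniz_bound F Φ β M C Cφ hC hCφ hF hΦsmooth hFk hΦk k hk x hx
  have hΦℂ : ContDiffOn ℝ (⊤ : ℕ∞) (fun y : ℝ => (Φ y : ℂ)) (Set.Ioi 0) :=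
    (Complex.ofRealCLM.contDiff.comp hΦsmooth).contDiffOn
  have hGcd : ContDiffOn ℝ (⊤ : ℕ∞) G (Set.Ioi 0) := hF.mul hΦℂ
  have hΦℂsupp : HasCompactSupport (fun y : ℝ => (Φ y : ℂ)) :=
    hΦsupp.comp_left (g := Complex.ofReal) Complex.ofReal_zero
  have hGsupp : HasCompactSupport G := hΦℂsupp.mul_left
  have hGzero : ∀ x : ℝ, x ∉ tsupport Φ → G x = 0 := by
    intro x hx
    simp [hGdef, image_eq_zero_of_notMem_tsupport hx]
  -- support bound R ≥ 1
  obtain ⟨R0, hR0⟩ : ∃ R : ℝ, ∀ x ∈ tsupport Φ, x ≤ R :=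
    (hΦsupp.isCompact.bddAbove).imp (fun R hR x hx => hR hx)
  set R : ℝ := max R0 1 with hRdef
  have hR1 : (1:ℝ) ≤ R := le_max_right _ _
  have hR0' : (0:ℝ) < R := lt_of_lt_of_le one_pos hR1
  have hGzR : ∀ x : ℝ, R < x → G x = 0 := by
    intro x hx
    refine hGzero x (fun h => ?_)
    exact absurd (le_trans (hR0 x h) (le_max_left _ _)) (not_le.2 hx)
  have hGnorm : ∀ x : ℝ, 0 < x → ‖G x‖ ≤ A * x ^ β := by
    intro x hx; simpa using hGb 0 (Nat.zero_le M) x hx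
  -- key lemma
  have hβM : β - (M : ℝ) < -1 := by linarith
  obtain ⟨c, hc, Hkey⟩ := key_IBP M β hβM
  -- basic integrability on pieces
  have hfc : ∀ ρ : ℝ, ContinuousOn (fun x : ℝ => Complex.exp (Complex.I * ρ * x) * G x)
      (Set.Ioi 0) := by
    intro ρ
    exact ((Complex.continuous_exp.comp (by continuity)).continuousOn).mul
      (hGcd.continuousOn)
  have hbint : ∀ s : ℝ, 0 < s → IntegrableOn (fun x : ℝ => A * x ^ β) (Set.Ioc 0 s) := by
    intro s hs
    have := intervalIntegral.intervalIntegrable_rpow' (a := 0) (b := s) hβ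
    rw [intervalIntegrable_iff_integrableOn_Ioc_of_le (le_of_lt hs)] at this
    exact this.const_mul A
  have hfbound : ∀ ρ : ℝ, ∀ s : ℝ, ∀ᵐ (x : ℝ) ∂(volume.restrict (Set.Ioc 0 s)),
      ‖Complex.exp (Complex.I * ρ * x) * G x‖ ≤ A * x ^ β := by
    intro ρ s
    refine (ae_restrict_iff' measurableSet_Ioc).2 (Filter.Eventually.of_forall fun x hx => ?_)
    rw [norm_mul]
    have h1 : ‖Complex.exp (Complex.I * ρ * x)‖ = 1 := by
      rw [Complex.norm_exp]; simp
    rw [h1, one_mul]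
    exact hGnorm x hx.1
  have hfint1 : ∀ ρ : ℝ, ∀ s : ℝ, 0 < s →
      IntegrableOn (fun x : ℝ => Complex.exp (Complex.I * ρ * x) * G x) (Set.Ioc 0 s) := by
    intro ρ s hs
    refine Integrable.mono' (hbint s hs) ?_ (hfbound ρ s)
    exact ((hfc ρ).mono (fun x hx => hx.1)).aestronglyMeasurable measurableSet_Ioc
  have hfint2 : ∀ ρ : ℝ, ∀ a : ℝ, 0 < a →
      IntegrableOn (fun x : ℝ => Complex.exp (Complex.I * ρ * x) * G x) (Set.Ioi a) := by
    intro ρ a ha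
    refine aux_integrableOn ha ((hfc ρ).mono (fun x hx => lt_of_lt_of_le ha hx)) (R := R + 1) ?_
    intro x hx
    rw [hGzR x (by linarith), mul_zero]
  -- estimate for inner piece
  have hinner : ∀ ρ : ℝ, ∀ s : ℝ, 0 < s →
      ‖∫ x in Set.Ioc (0:ℝ) s, Complex.exp (Complex.I * ρ * x) * G x‖
        ≤ A * s ^ (β + 1) / (β + 1) := by
    intro ρ s hs
    calc ‖∫ x in Set.Ioc (0:ℝ) s, Complex.exp (Complex.I * ρ * x) * G x‖
        ≤ ∫ x in Set.Ioc (0:ℝ) s, A * x ^ β :=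
          norm_integral_le_of_norm_le (hbint s hs) (hfbound ρ s)
      _ = A * s ^ (β + 1) / (β + 1) := by
          rw [← intervalIntegral.integral_of_le (le_of_lt hs), intervalIntegral.integral_const_mul,
            integral_rpow (Or.inl hβ), Real.zero_rpow (by linarith)]
          ring
  -- split
  have hsplit : ∀ ρ : ℝ, ∀ s : ℝ, 0 < s →
      ∫ x in Set.Ioi (0:ℝ), Complex.exp (Complex.I * ρ * x) * G x
        = (∫ x in Set.Ioc (0:ℝ) s, Complex.exp (Complex.I * ρ * x) * G x)
          + ∫ x in Set.Ioi s, Complex.exp (Complex.I * ρ * x) * G x := by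
    intro ρ s hs
    rw [← setIntegral_union (Set.Ioc_disjoint_Ioi le_rfl) measurableSet_Ioi
      (hfint1 ρ s hs) (hfint2 ρ s hs), Set.Ioc_union_Ioi_eq_Ioi (le_of_lt hs)]
  -- main claim with max
  have hβ1 : (0:ℝ) < β + 1 := by linarith
  set B : ℝ := A * R ^ (β + 1) / (β + 1) + (A / (β + 1) + A * c) with hBdef
  have hp1 : 0 < A * R ^ (β + 1) / (β + 1) :=
    div_pos (mul_pos hA (Real.rpow_pos_of_pos hR0' _)) hβ1
  have hp2 : 0 < A / (β + 1) := div_pos hA hβ1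
  have hp3 : 0 < A * c := mul_pos hA hc
  have hB : 0 < B := by rw [hBdef]; linarith
  have claim : ∀ ρ : ℝ, ‖∫ x in Set.Ioi (0:ℝ), Complex.exp (Complex.I * ρ * x) * G x‖
      ≤ B * (max 1 |ρ|) ^ (-β - 1) := by
    intro ρ
    rcases le_or_gt |ρ| 1 with hρ | hρ
    · -- small ρ
      rw [max_eq_left hρ, Real.one_rpow, mul_one]
      rw [hsplit ρ R hR0']
      have houter : ∫ x in Set.Ioi R, Complex.exp (Complex.I * ρ * x) * G x = 0 := by
        refine setIntegral_eq_zero_of_forall_eq_zero (fun x hx => ?_)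
        rw [hGzR x hx, mul_zero]
      rw [houter, add_zero]
      refine le_trans (hinner ρ R hR0') ?_
      rw [hBdef]
      linarith
    · -- large ρ
      have hρ1 : 1 ≤ |ρ| := le_of_lt hρ
      have hρ0 : (0:ℝ) < |ρ| := lt_of_lt_of_le one_pos hρ1
      have ha : (0:ℝ) < |ρ|⁻¹ := inv_pos.2 hρ0
      rw [max_eq_right hρ1]
      rw [hsplit ρ (|ρ|⁻¹) ha]
      have houter := Hkey A (le_of_lt hA) G hGcd hGsupp hGb ρ hρ1
      have hinner' := hinner ρ (|ρ|⁻¹) ha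
      have heq : A * (|ρ|⁻¹) ^ (β + 1) / (β + 1) = A / (β + 1) * |ρ| ^ (-β - 1) := by
        rw [Real.inv_rpow (le_of_lt hρ0), ← Real.rpow_neg (le_of_lt hρ0),
          show -(β + 1) = -β - 1 by ring]
        ring
      rw [heq] at hinner'
      calc ‖(∫ x in Set.Ioc (0:ℝ) (|ρ|⁻¹), Complex.exp (Complex.I * ρ * x) * G x)
            + ∫ x in Set.Ioi (|ρ|⁻¹), Complex.exp (Complex.I * ρ * x) * G x‖
          ≤ A / (β + 1) * |ρ| ^ (-β - 1) + A * c * |ρ| ^ (-β - 1) :=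
            le_trans (norm_add_le _ _) (add_le_add hinner' houter)
        _ = (A / (β + 1) + A * c) * |ρ| ^ (-β - 1) := by ring
        _ ≤ B * |ρ| ^ (-β - 1) := by
            have hp : (0:ℝ) ≤ |ρ| ^ (-β - 1) := Real.rpow_nonneg (le_of_lt hρ0) _
            exact mul_le_mul_of_nonneg_right (by rw [hBdef]; linarith) hp
  -- jap comparison
  refine ⟨B * Real.sqrt 2 ^ (β + 1), by positivity, ?_⟩
  intro ρ
  have hm1 : (1:ℝ) ≤ max 1 |ρ| := le_max_left _ _
  have hm0 : (0:ℝ) < max 1 |ρ| := lt_of_lt_of_le one_pos hm1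
  have hjap1 : (1:ℝ) ≤ jap ρ := jap_one_le ρ
  have hjap0 : (0:ℝ) < jap ρ := lt_of_lt_of_le one_pos hjap1
  have hjap2 : jap ρ ≤ Real.sqrt 2 * max 1 |ρ| := jap_le_sqrt_two_mul_max ρ
  have hs2 : (0:ℝ) < Real.sqrt 2 := by positivity
  -- (max)^(-β-1) ≤ √2^(β+1) * jap^(-β-1)
  have hcomp : (max 1 |ρ|) ^ (-β - 1) ≤ Real.sqrt 2 ^ (β + 1) * jap ρ ^ (-β - 1) := by
    have h1 : (Real.sqrt 2 * max 1 |ρ|) ^ (-β - 1) ≤ jap ρ ^ (-β - 1) :=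
      Real.rpow_le_rpow_of_nonpos hjap0 hjap2 (by linarith)
    rw [Real.mul_rpow (le_of_lt hs2) (le_of_lt hm0)] at h1
    have h2 := mul_le_mul_of_nonneg_left h1 (Real.rpow_nonneg (le_of_lt hs2) (β + 1))
    calc (max 1 |ρ|) ^ (-β - 1)
        = Real.sqrt 2 ^ (β + 1) * (Real.sqrt 2 ^ (-β - 1) * (max 1 |ρ|) ^ (-β - 1)) := by
          rw [← mul_assoc, ← Real.rpow_add hs2]
          simp
      _ ≤ Real.sqrt 2 ^ (β + 1) * jap ρ ^ (-β - 1) := h2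
  have hfinal := claim ρ
  have hgoal : ‖∫ lam in Set.Ioi (0 : ℝ),
      Complex.exp (Complex.I * ρ * lam) * F lam * (Φ lam : ℂ)‖
      = ‖∫ x in Set.Ioi (0:ℝ), Complex.exp (Complex.I * ρ * x) * G x‖ := by
    congr 1
    refine setIntegral_congr_fun measurableSet_Ioi (fun x _ => ?_)
    rw [hGdef, mul_assoc]
  rw [hgoal]
  calc ‖∫ x in Set.Ioi (0:ℝ), Complex.exp (Complex.I * ρ * x) * G x‖
      ≤ B * (max 1 |ρ|) ^ (-β - 1) := hfinal
    _ ≤ B * (Real.sqrt 2 ^ (β + 1) * jap ρ ^ (-β - 1)) :=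
        mul_le_mul_of_nonneg_left hcomp (le_of_lt hB)
    _ = B * Real.sqrt 2 ^ (β + 1) * jap ρ ^ (-β - 1) := by ring
end

section
/- Let n ≥ 2 and N > n−1. Then for every x ∈ ℝⁿ and r > 0, the surface integral of ⟨z⟩^(−N) over the sphere {z : |x−z| = r} satisfies: it is ≲ r^(n−1) ⟨x⟩^(−N) if r < |x|/2; ≲ |x|^(n−1) ⟨x⟩^(1−n) ⟨|x|−r⟩^(n−1−N) if |x|/2 ≤ r ≤ 2|x|; and ≲ r^(n−1) ⟨r⟩^(−N) if r > 2|x|. -/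
/-!
Write `k = n - 1`. A cap `{z ∈ sphere x r | ⟪z - x, v⟫ ≤ -b}` is the image of a `k`-dimensional ball
of radius `√(r² - b²)` under the graph map `w ↦ x + w - √(r² - ‖w‖²) • v`, which is Lipschitz with
constant `≲ 1 + r / b` there. Covering the sphere by `2 n` caps with `b = r / √n` gives
`μH[k] (sphere x r) ≲ r ^ k`. If `r ≤ 2 ‖x‖`, the part of the sphere inside `ball 0 s`, `s ≤ r / 2`,
lies in the cap facing the origin, which has `b ≥ r / 2` and base radius `≤ 2 s`; hence
`μH[k] (sphere x r ∩ ball 0 s) ≲ s ^ k`.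

For `r < ‖x‖ / 2` or `r > 2 ‖x‖`, `⟨z⟩` is comparable to `⟨x⟩`, resp. `⟨r⟩`, on the sphere, and the
first bound suffices. In the middle range `⟨z⟩ ^ (-N) > t` forces `‖z‖ < t ^ (-1 / N)`, so the
layer-cake formula bounds the integral by `∫₀ᵀ t ^ (-k / N) dt ≲ ⟨‖x‖ - r⟩ ^ (k - N)`, where
`T = ⟨‖x‖ - r⟩ ^ (-N)`; the integral converges because `k < N`. This is the claim when `‖x‖ ≥ 1`;
when `‖x‖ < 1` the bound `r ^ k ≲ ‖x‖ ^ k` already is.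
-/

open MeasureTheory Real

open Set Metric Module
open scoped RealInnerProductSpace ENNReal

theorem one_le_jap (t : ℝ) : 1 ≤ jap t :=
  Real.one_le_sqrt.mpr (by nlinarith)

theorem jap_pos (t : ℝ) : 0 < jap t := one_pos.trans_le (one_le_jap t)

theorem abs_le_jap (t : ℝ) : |t| ≤ jap t :=
  Real.abs_le_sqrt (by linarith)

theorem continuous_jap : Continuous jap :=
  (continuous_const.add (continuous_pow 2)).sqrt

theorem jap_le_jap {s t : ℝ} (h : |s| ≤ |t|) : jap s ≤ jap t :=
  Real.sqrt_le_sqrt (by nlinarith [sq_abs s, sq_abs t, abs_nonneg s])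

theorem jap_le_two_mul_jap {s t : ℝ} (h : |s| ≤ 2 * |t|) : jap s ≤ 2 * jap t := by
  rw [jap, jap, show (2 : ℝ) = √4 by rw [show (4 : ℝ) = 2 ^ 2 by norm_num, sqrt_sq zero_le_two],
    ← Real.sqrt_mul (by norm_num)]
  exact Real.sqrt_le_sqrt (by nlinarith [sq_abs s, sq_abs t, abs_nonneg s])

theorem jap_le_sqrt_two_mul {t : ℝ} (h : 1 ≤ |t|) : jap t ≤ √2 * |t| := by
  rw [jap, ← Real.sqrt_sq (abs_nonneg t), ← Real.sqrt_mul zero_le_two]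
  exact Real.sqrt_le_sqrt (by nlinarith [sq_abs t])

theorem jap_le_sqrt_two {t : ℝ} (h : |t| ≤ 1) : jap t ≤ √2 :=
  Real.sqrt_le_sqrt (by nlinarith [sq_abs t, abs_nonneg t])

theorem jap_rpow_neg_le {s t N : ℝ} (hN : 0 ≤ N) (h : |s| ≤ 2 * |t|) :
    jap t ^ (-N) ≤ 2 ^ N * jap s ^ (-N) := by
  calc jap t ^ (-N) ≤ (jap s / 2) ^ (-N) :=
        rpow_le_rpow_of_nonpos (by linarith [jap_pos s]) (by linarith [jap_le_two_mul_jap h])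
          (neg_nonpos.mpr hN)
    _ = 2 ^ N * jap s ^ (-N) := by
        rw [div_rpow (jap_pos s).le zero_le_two, rpow_neg zero_le_two, div_inv_eq_mul, mul_comm]

theorem le_mul_rpow_mul_jap_rpow_of_le {X r I A L κ N : ℝ} (hX : 0 < X) (hXr : X / 2 ≤ r)
    (hrX : r ≤ 2 * X) (hκ : 0 ≤ κ) (hκN : κ ≤ N) (hA : 0 ≤ A) (hL : 0 ≤ L)
    (hIA : I ≤ A * r ^ κ) (hIL : I ≤ L * jap (X - r) ^ (κ - N)) :
    I ≤ (2 ^ κ * √2 ^ N * A + √2 ^ κ * L) * X ^ κ * jap X ^ (-κ) * jap (X - r) ^ (κ - N) := by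
  have hW : 0 ≤ X ^ κ * jap X ^ (-κ) * jap (X - r) ^ (κ - N) := by
    have := jap_pos X; have := jap_pos (X - r); positivity
  rcases le_or_gt 1 X with hX1 | hX1
  · have hlow : 1 ≤ √2 ^ κ * X ^ κ * jap X ^ (-κ) := by
      rw [rpow_neg (jap_pos X).le, ← mul_rpow (by positivity) hX.le, ← div_eq_mul_inv,
        ← div_rpow (by positivity) (jap_pos X).le]
      refine one_le_rpow ((one_le_div (jap_pos X)).mpr ?_) hκ
      simpa [abs_of_pos hX] using jap_le_sqrt_two_mul (t := X) (by rwa [abs_of_pos hX])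
    calc I ≤ L * jap (X - r) ^ (κ - N) := hIL
      _ = L * 1 * jap (X - r) ^ (κ - N) := by ring
      _ ≤ L * (√2 ^ κ * X ^ κ * jap X ^ (-κ)) * jap (X - r) ^ (κ - N) := by
          have := jap_pos (X - r)
          gcongr
      _ ≤ _ := by
          nlinarith [mul_nonneg (mul_nonneg (rpow_nonneg zero_le_two κ)
            (rpow_nonneg (sqrt_nonneg 2) N)) hA]
  · -- For `X < 1` the bound `I ≤ A * r ^ κ` wins, since all brackets are at most `√2`.
    have h2 : (0 : ℝ) < √2 := by positivity
    have hlow : 1 ≤ √2 ^ N * jap X ^ (-κ) * jap (X - r) ^ (κ - N) := by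
      calc (1 : ℝ) = √2 ^ N * √2 ^ (-κ) * √2 ^ (κ - N) := by
            rw [← rpow_add h2, ← rpow_add h2]; ring_nf; exact (rpow_zero _).symm
        _ ≤ √2 ^ N * jap X ^ (-κ) * jap (X - r) ^ (κ - N) := by
            have h₁ : √2 ^ (-κ) ≤ jap X ^ (-κ) := rpow_le_rpow_of_nonpos (jap_pos X)
              (jap_le_sqrt_two (by rw [abs_of_pos hX]; exact hX1.le)) (neg_nonpos.mpr hκ)
            have h₂ : √2 ^ (κ - N) ≤ jap (X - r) ^ (κ - N) := rpow_le_rpow_of_nonpos (jap_pos _)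
              (jap_le_sqrt_two (by rw [abs_le]; constructor <;> linarith)) (by linarith)
            have := jap_pos X
            gcongr
    calc I ≤ A * r ^ κ := hIA
      _ ≤ A * (2 ^ κ * X ^ κ) := by
          rw [← mul_rpow zero_le_two hX.le]
          exact mul_le_mul_of_nonneg_left (rpow_le_rpow (by linarith) hrX hκ) hA
      _ ≤ A * (2 ^ κ * X ^ κ) * (√2 ^ N * jap X ^ (-κ) * jap (X - r) ^ (κ - N)) :=
          le_mul_of_one_le_right (by positivity) hlow
      _ ≤ _ := by
          nlinarith [mul_nonneg (rpow_nonneg (sqrt_nonneg 2) κ) hL]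

theorem abs_norm_sub_le_of_mem_sphere {F : Type*} [SeminormedAddCommGroup F] {x z : F} {r : ℝ}
    (hz : z ∈ sphere x r) : |‖x‖ - r| ≤ ‖z‖ := by
  rw [mem_sphere, dist_eq_norm] at hz
  have := abs_norm_sub_norm_le x (x - z)
  rwa [sub_sub_cancel, norm_sub_rev, hz] at this

theorem jap_norm_rpow_neg_le_of_mem_sphere {F : Type*} [SeminormedAddCommGroup F] {x z : F}
    {r t N : ℝ} (hN : 0 ≤ N) (hz : z ∈ sphere x r) (ht : |t| ≤ 2 * |‖x‖ - r|) :
    ‖jap ‖z‖ ^ (-N)‖ ≤ 2 ^ N * jap t ^ (-N) := by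
  rw [Real.norm_of_nonneg (rpow_nonneg (jap_pos _).le _)]
  exact jap_rpow_neg_le hN (ht.trans (by
    rw [abs_of_nonneg (norm_nonneg z)]; linarith [abs_norm_sub_le_of_mem_sphere hz]))

theorem setIntegral_le_mul_of_measure_le {α : Type*} [MeasurableSpace α] {μ : Measure α}
    {s : Set α} {f : α → ℝ} {A B : ℝ} (hA : 0 ≤ A) (hB : 0 ≤ B) (hμ : μ s ≤ ENNReal.ofReal A)
    (hf : ∀ x ∈ s, ‖f x‖ ≤ B) : ∫ x in s, f x ∂μ ≤ A * B :=
  calc ∫ x in s, f x ∂μ ≤ ‖∫ x in s, f x ∂μ‖ := le_norm_self _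
    _ ≤ B * μ.real s := norm_setIntegral_le_of_norm_le_const (hμ.trans_lt ENNReal.ofReal_lt_top) hf
    _ ≤ A * B := by
        rw [mul_comm]; exact mul_le_mul_of_nonneg_right (ENNReal.toReal_le_of_le_ofReal hA hμ) hB

theorem integral_le_of_measure_lt_le_rpow {α : Type*} [MeasurableSpace α] {μ : Measure α}
    {f : α → ℝ} {K T p : ℝ} (hf0 : 0 ≤ᵐ[μ] f) (hf : AEMeasurable f μ) (hK : 0 ≤ K)
    (hT : 0 ≤ T) (hp : p < 1) (hfT : ∀ᵐ x ∂μ, f x ≤ T)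
    (htail : ∀ t ∈ Ioc 0 T, μ {x | t < f x} ≤ ENNReal.ofReal (K * t ^ (-p))) :
    ∫ x, f x ∂μ ≤ K * T ^ (1 - p) / (1 - p) := by
  have htail' : ∀ t ∈ Ioi 0, μ {x | t < f x} ≤
      (Ioc 0 T).indicator (fun t => ENNReal.ofReal (K * t ^ (-p))) t := by
    intro t ht
    by_cases htT : t ≤ T
    · rw [indicator_of_mem (show t ∈ Ioc 0 T from ⟨ht, htT⟩)]
      exact htail t ⟨ht, htT⟩
    · refine le_of_eq_of_le (measure_mono_null (fun x hx => ?_) (ae_iff.mp hfT)) zero_le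
      exact not_le.mpr ((not_le.mp htT).trans hx)
  have hint : IntegrableOn (fun t => K * t ^ (-p)) (Ioc 0 T) :=
    ((intervalIntegral.intervalIntegrable_rpow' (by linarith)).1).const_mul _
  have hval : ∫ t in Ioc 0 T, K * t ^ (-p) = K * T ^ (1 - p) / (1 - p) := by
    rw [← intervalIntegral.integral_of_le hT, intervalIntegral.integral_const_mul,
      integral_rpow (Or.inl (by linarith)), zero_rpow (by linarith)]
    ring_nf
  rw [integral_eq_lintegral_of_nonneg_ae hf0 hf.aestronglyMeasurable, ← hval]
  refine ENNReal.toReal_le_of_le_ofReal (setIntegral_nonneg measurableSet_Ioc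
    fun t ht => mul_nonneg hK (rpow_nonneg ht.1.le _)) ?_
  calc ∫⁻ x, ENNReal.ofReal (f x) ∂μ = ∫⁻ t in Ioi 0, μ {x | t < f x} :=
        lintegral_eq_lintegral_meas_lt μ hf0 hf
    _ ≤ ∫⁻ t in Ioi 0, (Ioc 0 T).indicator (fun t => ENNReal.ofReal (K * t ^ (-p))) t :=
        setLIntegral_mono' measurableSet_Ioi htail'
    _ = ∫⁻ t in Ioc 0 T, ENNReal.ofReal (K * t ^ (-p)) := by
        rw [lintegral_indicator measurableSet_Ioc, Measure.restrict_restrict measurableSet_Ioc,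
          inter_eq_self_of_subset_left Ioc_subset_Ioi_self]
    _ = ENNReal.ofReal (∫ t in Ioc 0 T, K * t ^ (-p)) :=
        (ofReal_integral_eq_lintegral_ofReal hint ((ae_restrict_iff' measurableSet_Ioc).mpr
          (ae_of_all _ fun t ht => mul_nonneg hK (rpow_nonneg ht.1.le _)))).symm

theorem integral_sphere_jap_rpow_le {E : Type*} [NormedAddCommGroup E] [MeasurableSpace E]
    [BorelSpace E] {k : ℕ} {x : E} {r C N : ℝ} (hC : 0 ≤ C) (hN : k < N)
    (hball : ∀ s, 0 < s → μH[k] (sphere x r ∩ ball 0 s) ≤ ENNReal.ofReal (C * s ^ k)) :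
    ∫ z in sphere x r, jap ‖z‖ ^ (-N) ∂μH[k] ≤ C / (1 - k / N) * jap (‖x‖ - r) ^ ((k : ℝ) - N) := by
  have hN0 : 0 < N := (Nat.cast_nonneg k).trans_lt hN
  have hp : (k : ℝ) / N < 1 := (div_lt_one hN0).mpr hN
  have hmeas : MeasurableSet (sphere x r) := isClosed_sphere.measurableSet
  have hf : Continuous fun z : E => jap ‖z‖ ^ (-N) :=
    (continuous_jap.comp continuous_norm).rpow_const fun z => Or.inl (jap_pos _).ne'
  -- On the sphere `‖z‖ ≥ |‖x‖ - r|`, and `jap ‖z‖ ^ (-N) > t` forces `‖z‖ < t ^ (-1 / N)`.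
  have key := integral_le_of_measure_lt_le_rpow (μ := μH[k].restrict (sphere x r)) (K := C)
    (T := jap (‖x‖ - r) ^ (-N)) (ae_of_all _ fun z => rpow_nonneg (jap_pos _).le _)
    hf.measurable.aemeasurable hC (rpow_nonneg (jap_pos _).le _) hp
    ((ae_restrict_iff' hmeas).mpr (ae_of_all _ fun z hz =>
      rpow_le_rpow_of_nonpos (jap_pos _) (jap_le_jap (by
        rw [abs_of_nonneg (norm_nonneg z)]; exact abs_norm_sub_le_of_mem_sphere hz))
        (neg_nonpos.mpr hN0.le)))
    (fun t ht => by
      have hsub : sphere x r ∩ {z | t < jap ‖z‖ ^ (-N)} ⊆ sphere x r ∩ ball 0 (t ^ (-N)⁻¹) :=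
        fun z ⟨hz, hzt⟩ => ⟨hz, mem_ball_zero_iff.mpr <|
          ((abs_of_nonneg (norm_nonneg z)).symm.le.trans (abs_le_jap _)).trans_lt
            ((lt_rpow_inv_iff_of_neg (jap_pos _) ht.1 (neg_lt_zero.mpr hN0)).mpr hzt)⟩
      rw [Measure.restrict_apply' hmeas, inter_comm]
      refine (measure_mono hsub).trans ((hball _ (rpow_pos_of_pos ht.1 _)).trans_eq ?_)
      rw [← rpow_natCast, ← rpow_mul ht.1.le]
      congr 2
      field_simp)
  refine key.trans_eq ?_
  rw [← rpow_mul (jap_pos _).le]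
  field_simp
  ring_nf

theorem Real.abs_sqrt_sub_sqrt_le {u u' b : ℝ} (hb : 0 < b) (hu : b ^ 2 ≤ u) (hu' : b ^ 2 ≤ u') :
    |√u - √u'| ≤ |u - u'| / (2 * b) := by
  have hsu : b ≤ √u := Real.le_sqrt_of_sq_le hu
  have hsu' : b ≤ √u' := Real.le_sqrt_of_sq_le hu'
  have hprod : |√u - √u'| * (√u + √u') = |u - u'| := by
    rw [← abs_of_nonneg (by linarith : 0 ≤ √u + √u'), ← abs_mul]
    congr 1
    linear_combination sq_sqrt ((sq_nonneg b).trans hu) - sq_sqrt ((sq_nonneg b).trans hu')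
  rw [le_div_iff₀ (by positivity), ← hprod]
  exact mul_le_mul_of_nonneg_left (by linarith) (abs_nonneg _)

section Sphere

variable {E F : Type*} [NormedAddCommGroup E] [InnerProductSpace ℝ E] [SeminormedAddCommGroup F]
  [Module ℝ F]

noncomputable def sphereChart (V : F →ₗᵢ[ℝ] E) (x v : E) (r : ℝ) (w : F) : E :=
  x + V w - √(r ^ 2 - ‖w‖ ^ 2) • v

theorem lipschitzOnWith_sphereChart (V : F →ₗᵢ[ℝ] E) (x : E) {v : E} (hv : ‖v‖ = 1)
    {r b ρ : ℝ} (hb : 0 < b) (hρ : ρ ^ 2 ≤ r ^ 2 - b ^ 2) :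
    LipschitzOnWith (1 + ρ / b).toNNReal (sphereChart V x v r) (closedBall 0 ρ) := by
  refine LipschitzOnWith.of_dist_le_mul fun w hw w' hw' => ?_
  rw [mem_closedBall_zero_iff] at hw hw'
  have hρ0 : 0 ≤ ρ := (norm_nonneg w).trans hw
  have hsq : ∀ {y : F}, ‖y‖ ≤ ρ → b ^ 2 ≤ r ^ 2 - ‖y‖ ^ 2 := fun hy => by
    nlinarith [pow_le_pow_left₀ (norm_nonneg _) hy 2]
  have hnorm_sq : |(r ^ 2 - ‖w‖ ^ 2) - (r ^ 2 - ‖w'‖ ^ 2)| ≤ 2 * ρ * ‖w - w'‖ := by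
    rw [show (r ^ 2 - ‖w‖ ^ 2) - (r ^ 2 - ‖w'‖ ^ 2) = (‖w'‖ + ‖w‖) * (‖w'‖ - ‖w‖) by ring,
      abs_mul, abs_of_nonneg (by positivity), ← abs_neg, neg_sub]
    exact mul_le_mul (by linarith) (abs_norm_sub_norm_le w w') (abs_nonneg _) (by positivity)
  have hsqrt := Real.abs_sqrt_sub_sqrt_le hb (hsq hw) (hsq hw')
  rw [Real.coe_toNNReal _ (by positivity), dist_eq_norm, dist_eq_norm]
  calc ‖sphereChart V x v r w - sphereChart V x v r w'‖
      = ‖V (w - w') - (√(r ^ 2 - ‖w‖ ^ 2) - √(r ^ 2 - ‖w'‖ ^ 2)) • v‖ := by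
        rw [sphereChart, sphereChart, map_sub, sub_smul]; abel_nf
    _ ≤ ‖w - w'‖ + |√(r ^ 2 - ‖w‖ ^ 2) - √(r ^ 2 - ‖w'‖ ^ 2)| := by
        refine (norm_sub_le _ _).trans_eq ?_
        rw [V.norm_map, norm_smul, hv, mul_one, Real.norm_eq_abs]
    _ ≤ ‖w - w'‖ + 2 * ρ * ‖w - w'‖ / (2 * b) := by
        gcongr
        exact hsqrt.trans (div_le_div_of_nonneg_right hnorm_sq (by positivity))
    _ = (1 + ρ / b) * ‖w - w'‖ := by field_simp

theorem cap_subset_image_sphereChart {V : F →ₗᵢ[ℝ] E} {v : E}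
    (hV : ∀ y, ⟪y, v⟫ = 0 → y ∈ range V) (hv : ‖v‖ = 1) (x : E) {r b : ℝ} (hb : 0 ≤ b) :
    {z ∈ sphere x r | ⟪z - x, v⟫ ≤ -b} ⊆ sphereChart V x v r '' closedBall 0 √(r ^ 2 - b ^ 2) := by
  rintro z ⟨hz, hzb⟩
  rw [mem_sphere, dist_eq_norm] at hz
  set c := ⟪z - x, v⟫
  obtain ⟨w, hw⟩ := hV (z - x - c • v) (by
    rw [inner_sub_left, real_inner_smul_left, real_inner_self_eq_norm_sq, hv]; ring)
  have hpyth : ‖w‖ ^ 2 = r ^ 2 - c ^ 2 := by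
    have := norm_sub_sq_real (z - x) (c • v)
    rw [← hw, V.norm_map, norm_smul, hv, real_inner_smul_right, Real.norm_eq_abs, hz] at this
    rw [this, mul_one, sq_abs]; ring
  refine ⟨w, ?_, ?_⟩
  · rw [mem_closedBall_zero_iff, ← Real.sqrt_sq (norm_nonneg w)]
    exact Real.sqrt_le_sqrt (by rw [hpyth]; nlinarith)
  · rw [sphereChart, hpyth, sub_sub_cancel, Real.sqrt_sq_eq_abs, abs_of_nonpos (by linarith), hw]
    module

theorem exists_linearIsometry_range_orthogonal {k : ℕ} (hk : finrank ℝ E = k + 1) {v : E}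
    (hv : v ≠ 0) : ∃ V : EuclideanSpace ℝ (Fin k) →ₗᵢ[ℝ] E, ∀ y, ⟪y, v⟫ = 0 → y ∈ range V := by
  have : Fact (finrank ℝ E = k + 1) := ⟨hk⟩
  let e := (OrthonormalBasis.fromOrthogonalSpanSingleton (𝕜 := ℝ) k hv).repr
  refine ⟨(ℝ ∙ v)ᗮ.subtypeₗᵢ.comp e.symm.toLinearIsometry, fun y hy => ⟨e ⟨y, ?_⟩, by simp⟩⟩
  exact Submodule.mem_orthogonal_singleton_iff_inner_left.mpr hy

theorem sphere_subset_iUnion_cap {ι : Type*} [Fintype ι] [Nonempty ι]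
    (e : OrthonormalBasis ι ℝ E) (x : E) (r : ℝ) :
    sphere x r ⊆ ⋃ i, ({z ∈ sphere x r | ⟪z - x, e i⟫ ≤ -(r / √(Fintype.card ι))} ∪
      {z ∈ sphere x r | ⟪z - x, -e i⟫ ≤ -(r / √(Fintype.card ι))}) := by
  intro z hz
  have hzr : ‖z - x‖ = r := by rwa [mem_sphere, dist_eq_norm] at hz
  have hr : 0 ≤ r := hzr ▸ norm_nonneg _
  -- Some coordinate of `z - x` carries at least the average share `r ^ 2 / card ι` of `r ^ 2`.
  obtain ⟨i, -, hi⟩ := Finset.exists_le_of_sum_le (f := fun _ => (r / √(Fintype.card ι)) ^ 2)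
    (g := fun i => ⟪e i, z - x⟫ ^ 2) Finset.univ_nonempty (by
      have := e.sum_sq_norm_inner_right (z - x)
      simp only [Real.norm_eq_abs, sq_abs] at this
      rw [this, hzr, Finset.sum_const, Finset.card_univ, nsmul_eq_mul, div_pow,
        sq_sqrt (Nat.cast_nonneg _), mul_div_cancel₀ _ (by positivity)])
  rw [real_inner_comm] at hi
  have hb : 0 ≤ r / √(Fintype.card ι) := by positivity
  refine mem_iUnion.mpr ⟨i, ?_⟩
  rcases le_total ⟪z - x, e i⟫ 0 with hneg | hpos
  · exact Or.inl ⟨hz, by nlinarith⟩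
  · exact Or.inr ⟨hz, by rw [inner_neg_right]; nlinarith⟩

theorem sphere_inter_ball_subset_cap {x : E} (hx : 0 < ‖x‖) (r s : ℝ) :
    sphere x r ∩ ball 0 s ⊆
      {z ∈ sphere x r | ⟪z - x, ‖x‖⁻¹ • x⟫ ≤ -((‖x‖ ^ 2 + r ^ 2 - s ^ 2) / (2 * ‖x‖))} := by
  rintro z ⟨hz, hzs⟩
  refine ⟨hz, ?_⟩
  rw [mem_sphere, dist_eq_norm] at hz
  rw [mem_ball_zero_iff] at hzs
  have hexp := norm_add_sq_real x (z - x)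
  rw [add_sub_cancel, hz] at hexp
  rw [real_inner_smul_right, real_inner_comm, inv_mul_eq_div, div_le_iff₀ hx, neg_mul,
    div_mul_eq_mul_div, mul_div_mul_right _ _ hx.ne']
  nlinarith [mul_self_lt_mul_self (norm_nonneg z) hzs]

variable [MeasurableSpace E] [BorelSpace E]

theorem hausdorffMeasure_cap_le {k : ℕ} (hk : finrank ℝ E = k + 1) (x : E) {v : E}
    (hv : ‖v‖ = 1) {r b ρ : ℝ} (hb : 0 < b) (hρ : 0 ≤ ρ) (hbρ : r ^ 2 - b ^ 2 ≤ ρ ^ 2) :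
    μH[k] {z ∈ sphere x r | ⟪z - x, v⟫ ≤ -b} ≤
      ENNReal.ofReal (((1 + ρ / b) * ρ) ^ k) * μH[k] (ball (0 : EuclideanSpace ℝ (Fin k)) 1) := by
  rcases lt_or_ge r b with hrb | hbr
  · have hempty : {z ∈ sphere x r | ⟪z - x, v⟫ ≤ -b} = ∅ := by
      refine eq_empty_of_forall_notMem fun z ⟨hz, hzb⟩ => ?_
      rw [mem_sphere, dist_eq_norm] at hz
      have := abs_real_inner_le_norm (z - x) v
      rw [hz, hv, mul_one] at this
      linarith [neg_abs_le ⟪z - x, v⟫]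
    rw [hempty, measure_empty]
    exact zero_le
  obtain ⟨V, hV⟩ := exists_linearIsometry_range_orthogonal hk (norm_pos_iff.mp (hv ▸ one_pos))
  set ρ₀ := √(r ^ 2 - b ^ 2)
  have hρ₀ : ρ₀ ^ 2 ≤ r ^ 2 - b ^ 2 := (sq_sqrt (by nlinarith)).le
  have hρ₀ρ : ρ₀ ≤ ρ := (Real.sqrt_le_sqrt hbρ).trans_eq (sqrt_sq hρ)
  calc μH[k] {z ∈ sphere x r | ⟪z - x, v⟫ ≤ -b}
      ≤ μH[k] (sphereChart V x v r '' closedBall 0 ρ₀) :=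
        measure_mono (cap_subset_image_sphereChart hV hv x hb.le)
    _ ≤ ((1 + ρ₀ / b).toNNReal : ℝ≥0∞) ^ (k : ℝ) * μH[k] (closedBall 0 ρ₀) :=
        (lipschitzOnWith_sphereChart V x hv hb hρ₀).hausdorffMeasure_image_le (Nat.cast_nonneg k)
    _ = ENNReal.ofReal ((1 + ρ₀ / b) ^ k) * (ENNReal.ofReal (ρ₀ ^ k) *
          μH[k] (ball (0 : EuclideanSpace ℝ (Fin k)) 1)) := by
        rw [Measure.addHaar_closedBall _ _ (sqrt_nonneg _), finrank_euclideanSpace_fin,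
          ENNReal.rpow_natCast, ENNReal.ofReal_pow (sqrt_nonneg _),
          ENNReal.ofReal_pow (p := 1 + ρ₀ / b) (by positivity)]
        rfl
    _ ≤ ENNReal.ofReal ((1 + ρ / b) ^ k) * (ENNReal.ofReal (ρ ^ k) *
          μH[k] (ball (0 : EuclideanSpace ℝ (Fin k)) 1)) := by gcongr
    _ = ENNReal.ofReal (((1 + ρ / b) * ρ) ^ k) * μH[k] (ball (0 : EuclideanSpace ℝ (Fin k)) 1) := by
        rw [← mul_assoc, ← ENNReal.ofReal_mul (by positivity), mul_pow]

theorem exists_hausdorffMeasure_sphere_le {k : ℕ} (hk : finrank ℝ E = k + 1) :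
    ∃ C, 0 ≤ C ∧ ∀ (x : E) {r : ℝ}, 0 < r → μH[k] (sphere x r) ≤ ENNReal.ofReal (C * r ^ k) := by
  set β := (μH[k] (ball (0 : EuclideanSpace ℝ (Fin k)) 1)).toReal
  have hβ : μH[k] (ball (0 : EuclideanSpace ℝ (Fin k)) 1) = ENNReal.ofReal β :=
    (ENNReal.ofReal_toReal measure_ball_lt_top.ne).symm
  refine ⟨2 * (k + 1) * (1 + √(k + 1)) ^ k * β, by positivity, fun x r hr => ?_⟩
  have : FiniteDimensional ℝ E := Module.finite_of_finrank_eq_succ hk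
  have : Nonempty (Fin (finrank ℝ E)) := ⟨⟨0, by omega⟩⟩
  set e := stdOrthonormalBasis ℝ E
  have hcard : (Fintype.card (Fin (finrank ℝ E)) : ℝ) = k + 1 := by
    rw [Fintype.card_fin, hk, Nat.cast_succ]
  have hcap : ∀ v : E, ‖v‖ = 1 → μH[k] {z ∈ sphere x r | ⟪z - x, v⟫ ≤ -(r / √(k + 1))} ≤
      ENNReal.ofReal ((1 + √(k + 1)) ^ k * β * r ^ k) := by
    intro v hv
    refine (hausdorffMeasure_cap_le hk x hv (by positivity) hr.le (by nlinarith)).trans_eq ?_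
    rw [div_div_cancel₀ hr.ne', hβ, ← ENNReal.ofReal_mul (by positivity), mul_pow]
    ring_nf
  calc μH[k] (sphere x r)
      ≤ ∑ i, μH[k] ({z ∈ sphere x r | ⟪z - x, e i⟫ ≤ -(r / √(k + 1))} ∪
          {z ∈ sphere x r | ⟪z - x, -e i⟫ ≤ -(r / √(k + 1))}) := by
        refine (measure_mono ?_).trans (measure_iUnion_fintype_le _ _)
        simpa only [hcard] using sphere_subset_iUnion_cap e x r
    _ ≤ ∑ _i, 2 * ENNReal.ofReal ((1 + √(k + 1)) ^ k * β * r ^ k) := by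
        refine Finset.sum_le_sum fun i _ => (measure_union_le _ _).trans ?_
        rw [two_mul]
        exact add_le_add (hcap _ (e.orthonormal.1 i))
          (hcap _ ((norm_neg _).trans (e.orthonormal.1 i)))
    _ = ENNReal.ofReal (2 * (k + 1) * (1 + √(k + 1)) ^ k * β * r ^ k) := by
        rw [Finset.sum_const, Finset.card_univ, Fintype.card_fin, hk, nsmul_eq_mul,
          ← ENNReal.ofReal_natCast, ← ENNReal.ofReal_ofNat 2, ← ENNReal.ofReal_mul (by positivity),
          ← ENNReal.ofReal_mul (by positivity)]
        push_cast
        ring_nf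

theorem exists_hausdorffMeasure_sphere_inter_ball_le {k : ℕ} (hk : finrank ℝ E = k + 1) :
    ∃ C, 0 ≤ C ∧ ∀ (x : E) {r s : ℝ}, 0 < r → r ≤ 2 * ‖x‖ →
      μH[k] (sphere x r ∩ ball 0 s) ≤ ENNReal.ofReal (C * s ^ k) := by
  obtain ⟨C₀, hC₀, hsphere⟩ := exists_hausdorffMeasure_sphere_le hk
  set β := (μH[k] (ball (0 : EuclideanSpace ℝ (Fin k)) 1)).toReal
  have hβ : μH[k] (ball (0 : EuclideanSpace ℝ (Fin k)) 1) = ENNReal.ofReal β :=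
    (ENNReal.ofReal_toReal measure_ball_lt_top.ne).symm
  have hβ0 : 0 ≤ β := ENNReal.toReal_nonneg
  refine ⟨6 ^ k * β + 2 ^ k * C₀, by positivity, fun x r s hr hrx => ?_⟩
  rcases le_or_gt s 0 with hs | hs
  · rw [ball_eq_empty.mpr hs, inter_empty, measure_empty]
    exact zero_le
  rcases lt_or_ge (r / 2) s with hrs | hsr
  · calc μH[k] (sphere x r ∩ ball 0 s) ≤ ENNReal.ofReal (C₀ * r ^ k) :=
          (measure_mono inter_subset_left).trans (hsphere x hr)
      _ ≤ ENNReal.ofReal ((6 ^ k * β + 2 ^ k * C₀) * s ^ k) := by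
          refine ENNReal.ofReal_le_ofReal ?_
          have : r ^ k ≤ 2 ^ k * s ^ k := by
            rw [← mul_pow]; exact pow_le_pow_left₀ hr.le (by linarith) k
          nlinarith [mul_le_mul_of_nonneg_left this hC₀,
            mul_nonneg (mul_nonneg (pow_nonneg (by norm_num : (0 : ℝ) ≤ 6) k) hβ0)
              (pow_nonneg hs.le k)]
  have hx : 0 < ‖x‖ := by linarith
  set b := (‖x‖ ^ 2 + r ^ 2 - s ^ 2) / (2 * ‖x‖)
  have hb : r / 2 ≤ b := by
    rw [le_div_iff₀ (by positivity)]; nlinarith [sq_nonneg (‖x‖ - r / 2)]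
  have hbx : 2 * ‖x‖ * b = ‖x‖ ^ 2 + r ^ 2 - s ^ 2 := by simp only [b]; field_simp
  have hv : ‖‖x‖⁻¹ • x‖ = 1 := by rw [norm_smul, norm_inv, norm_norm, inv_mul_cancel₀ hx.ne']
  have hbase : r ^ 2 - b ^ 2 ≤ (2 * s) ^ 2 := by
    rcases le_total r b with h | h
    · nlinarith
    · nlinarith [mul_le_mul_of_nonneg_right hrx (sub_nonneg.mpr h), sq_nonneg (‖x‖ - r)]
  have hcap := hausdorffMeasure_cap_le hk x hv (by linarith) (by linarith) hbase
  have hsb0 : 0 ≤ 2 * s / b := div_nonneg (by linarith) (by linarith)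
  have hsb : 2 * s / b ≤ 2 := by rw [div_le_iff₀ (by linarith)]; linarith
  refine (measure_mono (sphere_inter_ball_subset_cap hx r s)).trans (hcap.trans ?_)
  rw [hβ, ← ENNReal.ofReal_mul (pow_nonneg (by positivity) k)]
  refine ENNReal.ofReal_le_ofReal ?_
  calc ((1 + 2 * s / b) * (2 * s)) ^ k * β ≤ (3 * (2 * s)) ^ k * β := by gcongr; linarith
    _ ≤ (6 ^ k * β + 2 ^ k * C₀) * s ^ k := by
        rw [show 3 * (2 * s) = 6 * s by ring, mul_pow]
        nlinarith [mul_nonneg (pow_nonneg (by norm_num : (0 : ℝ) ≤ 2) k) hC₀, pow_nonneg hs.le k]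

theorem exists_integral_sphere_jap_rpow_le {k : ℕ} (hk : finrank ℝ E = k + 1) {N : ℝ}
    (hN : k < N) :
    ∃ C : ℝ, 0 < C ∧ ∀ (x : E) (r : ℝ), 0 < r →
      ((r < ‖x‖ / 2 →
        ∫ z in sphere x r, jap ‖z‖ ^ (-N) ∂μH[k] ≤ C * r ^ (k : ℝ) * jap ‖x‖ ^ (-N)) ∧
      (‖x‖ / 2 ≤ r → r ≤ 2 * ‖x‖ →
        ∫ z in sphere x r, jap ‖z‖ ^ (-N) ∂μH[k] ≤
          C * ‖x‖ ^ (k : ℝ) * jap ‖x‖ ^ (-(k : ℝ)) * jap (‖x‖ - r) ^ ((k : ℝ) - N)) ∧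
      (2 * ‖x‖ < r →
        ∫ z in sphere x r, jap ‖z‖ ^ (-N) ∂μH[k] ≤ C * r ^ (k : ℝ) * jap r ^ (-N))) := by
  obtain ⟨A, hA, hsphere⟩ := exists_hausdorffMeasure_sphere_le hk
  obtain ⟨B, hB, hball⟩ := exists_hausdorffMeasure_sphere_inter_ball_le hk
  have hN0 : 0 ≤ N := (Nat.cast_nonneg k).trans hN.le
  have hL : 0 ≤ B / (1 - k / N) :=
    div_nonneg hB (sub_nonneg.mpr ((div_le_one₀ (by linarith)).mpr hN.le))
  set C₂ := 2 ^ (k : ℝ) * √2 ^ N * A + √2 ^ (k : ℝ) * (B / (1 - k / N))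
  have hC₂ : 0 ≤ C₂ := by positivity
  have houter : ∀ (x : E) (r t : ℝ), 0 < r → |t| ≤ 2 * |‖x‖ - r| →
      ∫ z in sphere x r, jap ‖z‖ ^ (-N) ∂μH[k] ≤
        (2 ^ N * A + C₂ + 1) * r ^ (k : ℝ) * jap t ^ (-N) := by
    intro x r t hr ht
    refine (setIntegral_le_mul_of_measure_le (by positivity) (by have := jap_pos t; positivity)
      (hsphere x hr) fun z hz => jap_norm_rpow_neg_le_of_mem_sphere hN0 hz ht).trans ?_
    have := jap_pos t
    calc A * r ^ k * (2 ^ N * jap t ^ (-N)) = 2 ^ N * A * (r ^ k * jap t ^ (-N)) := by ring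
      _ ≤ (2 ^ N * A + C₂ + 1) * (r ^ k * jap t ^ (-N)) := by gcongr; linarith
      _ = (2 ^ N * A + C₂ + 1) * r ^ (k : ℝ) * jap t ^ (-N) := by rw [rpow_natCast]; ring
  refine ⟨2 ^ N * A + C₂ + 1, by positivity, fun x r hr => ⟨fun h => houter x r _ hr ?_,
    fun h₁ h₂ => ?_, fun h => houter x r _ hr ?_⟩⟩
  · rw [abs_of_nonneg (norm_nonneg x), abs_of_pos (by linarith)]; linarith
  · refine (le_mul_rpow_mul_jap_rpow_of_le (by linarith) h₁ h₂ (Nat.cast_nonneg k) hN.le hA hL ?_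
      (integral_sphere_jap_rpow_le hB hN fun s _ => hball x hr h₂)).trans ?_
    · refine (setIntegral_le_mul_of_measure_le (by positivity) zero_le_one (hsphere x hr)
        fun z _ => ?_).trans_eq (by rw [mul_one, rpow_natCast])
      rw [Real.norm_of_nonneg (rpow_nonneg (jap_pos _).le _)]
      exact rpow_le_one_of_one_le_of_nonpos (one_le_jap _) (neg_nonpos.mpr hN0)
    · have := jap_pos ‖x‖
      have := jap_pos (‖x‖ - r)
      have : 0 ≤ 2 ^ N * A := by positivity
      gcongr ?_ * _ * _ * _
      linarith
  · rw [abs_of_pos hr, abs_of_nonpos (by linarith [norm_nonneg x])]; linarith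

end Sphere

/-- For `n ≥ 2` and `N > n−1`, the surface integral of `⟨z⟩^(−N)` over the
sphere `{z : |x−z| = r}` obeys the three-regime bound depending on whether `r < |x|/2`,
`|x|/2 ≤ r ≤ 2|x|`, or `r > 2|x|`. -/
theorem sphere_integral_bound
    (n : ℕ) (hn : 2 ≤ n) (N : ℝ) (hN : (n : ℝ) - 1 < N) :
    ∃ C : ℝ, 0 < C ∧ ∀ (x : EuclideanSpace ℝ (Fin n)) (r : ℝ), 0 < r →
      ((r < ‖x‖ / 2 →
        (∫ z in Metric.sphere x r, jap ‖z‖ ^ (-N) ∂(μH[(n : ℝ) - 1]))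
          ≤ C * r ^ ((n : ℝ) - 1) * jap ‖x‖ ^ (-N)) ∧
      (‖x‖ / 2 ≤ r → r ≤ 2 * ‖x‖ →
        (∫ z in Metric.sphere x r, jap ‖z‖ ^ (-N) ∂(μH[(n : ℝ) - 1]))
          ≤ C * ‖x‖ ^ ((n : ℝ) - 1) * jap ‖x‖ ^ (1 - (n : ℝ))
              * jap (‖x‖ - r) ^ ((n : ℝ) - 1 - N)) ∧
      (2 * ‖x‖ < r →
        (∫ z in Metric.sphere x r, jap ‖z‖ ^ (-N) ∂(μH[(n : ℝ) - 1]))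
          ≤ C * r ^ ((n : ℝ) - 1) * jap r ^ (-N))) := by
  obtain ⟨k, rfl⟩ : ∃ k, n = k + 1 := ⟨n - 1, by omega⟩
  have hcast : ((k + 1 : ℕ) : ℝ) - 1 = k := by push_cast; ring
  rw [hcast] at hN ⊢
  rw [show (1 : ℝ) - ((k + 1 : ℕ) : ℝ) = -k by push_cast; ring]
  exact exists_integral_sphere_jap_rpow_le finrank_euclideanSpace_fin hN
end
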